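/- arXiv:2412.18018 — 2 statements merged into one kernel-verified Lean document; each statement's English description precedes it below -/
import Mathlib

section
/- Let G be a simple N-party holographic graph model, X ⊆ ⟦N⟧ a nonempty subsystem, and {X_1,…,X_m} a partition of X such that the vertex sets of the connected components of G_X are exactly mC_{X_1},…,mC_{X_m}. Then for any disjoint nonempty Y, Z with Y ∪ Z = X: I(Y:Z) = 0 if and only if m ≥ 2 and for each i ∈ {1,…,m} either X_i ⊆ Y or X_i ⊆ Z. -/
namespace HEC

/-- The parties `⟦N⟧ = {0,1,…,N}`, where `0` is the purifier. -/
abbrev Party (N : ℕ) := Fin (N + 1)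

/-- A collection of parties. -/
abbrev PSet (N : ℕ) := Finset (Party N)

/-- An `N`-party holographic graph model: a finite weighted graph with no loops or
multiple edges (encoded by a symmetric nonnegative weight function whose support is
the edge set, so that every edge has strictly positive weight and the diagonal
vanishes), together with a labeling of the boundary vertices (those with
`label v = some ℓ`) by parties in `⟦N⟧` such that every party labels at least one
boundary vertex. -/
structure GraphModel (N : ℕ) where
  V : Type
  [fintypeV : Fintype V]
  [decEqV : DecidableEq V]
  w : V → V → ℝ
  w_symm : ∀ u v : V, w u v = w v u
  w_loopless : ∀ v : V, w v v = 0
  w_nonneg : ∀ u v : V, 0 ≤ w u v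
  label : V → Option (Party N)
  label_surj : ∀ ℓ : Party N, ∃ v : V, label v = some ℓ

attribute [instance] GraphModel.fintypeV GraphModel.decEqV

/-- `C` is a `Y`-cut: its intersection with the boundary vertices consists exactly of
the boundary vertices labeled by parties in `Y`. -/
def IsCut {N : ℕ} (G : GraphModel N) (Y : PSet N) (C : Finset G.V) : Prop :=
  ∀ v : G.V, ∀ ℓ : Party N, G.label v = some ℓ → (v ∈ C ↔ ℓ ∈ Y)

/-- The cost `‖C‖` of a cut: the total weight of the edges with exactly one endpoint
in `C`. -/
def cutCost {N : ℕ} (G : GraphModel N) (C : Finset G.V) : ℝ :=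
  ∑ u ∈ C, ∑ v ∈ Cᶜ, G.w u v

/-- `C` is a min-cut for `Y`: a `Y`-cut of minimal cost among all `Y`-cuts. -/
def IsMinCut {N : ℕ} (G : GraphModel N) (Y : PSet N) (C : Finset G.V) : Prop :=
  IsCut G Y C ∧ ∀ C' : Finset G.V, IsCut G Y C' → cutCost G C ≤ cutCost G C'

/-- `C` is a minimal min-cut for `Y`: a min-cut for `Y` which is minimal with respect
to set inclusion among all min-cuts for `Y`. -/
def IsMinimalMinCut {N : ℕ} (G : GraphModel N) (Y : PSet N) (C : Finset G.V) : Prop :=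
  IsMinCut G Y C ∧ ∀ C' : Finset G.V, IsMinCut G Y C' → C' ⊆ C → C' = C

/-- The min-cut entropy `S_Y`: the minimum of `‖C‖` over all `Y`-cuts. -/
noncomputable def gEntropy {N : ℕ} (G : GraphModel N) (Y : PSet N) : ℝ :=
  sInf (cutCost G '' {C : Finset G.V | IsCut G Y C})

/-- The mutual information `I(Y:Z) = S_Y + S_Z - S_{Y∪Z}` computed from min-cuts. -/
noncomputable def gMI {N : ℕ} (G : GraphModel N) (Y Z : PSet N) : ℝ :=
  gEntropy G Y + gEntropy G Z - gEntropy G (Y ∪ Z)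

/-- Reachability inside the subgraph of `G` induced by the vertex set `C`. -/
def Reaches {N : ℕ} (G : GraphModel N) (C : Finset G.V) : G.V → G.V → Prop :=
  Relation.ReflTransGen (fun a b => a ∈ C ∧ b ∈ C ∧ 0 < G.w a b)

/-- `D` is the vertex set of a connected component of the subgraph of `G` induced
by `C`. -/
def IsCompOf {N : ℕ} (G : GraphModel N) (C D : Finset G.V) : Prop :=
  ∃ v ∈ C, ∀ u : G.V, u ∈ D ↔ (u ∈ C ∧ Reaches G C v u)

/-- The graph model is simple: the labeling is a bijection between the boundary
vertices and `⟦N⟧`, i.e. every party labels exactly one vertex. -/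
def IsSimple {N : ℕ} (G : GraphModel N) : Prop :=
  ∀ ℓ : Party N, ∃! v : G.V, G.label v = some ℓ

/-- The underlying simple graph of a graph model: an edge wherever the weight is
strictly positive. -/
def GraphModel.toSimpleGraph {N : ℕ} (G : GraphModel N) : SimpleGraph G.V where
  Adj u v := 0 < G.w u v
  symm := by
    constructor
    intro u v h
    rw [G.w_symm v u]
    exact h
  loopless := by
    constructor
    intro v h
    rw [G.w_loopless v] at h
    exact lt_irrefl 0 h

section Aux

open Finset

variable {N : ℕ} (G : GraphModel N)

/-- Total weight between two vertex sets. -/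
noncomputable def ww (A B : Finset G.V) : ℝ := ∑ a ∈ A, ∑ b ∈ B, G.w a b

/-- Real-valued indicator of a finite vertex set. -/
noncomputable def χ (A : Finset G.V) (u : G.V) : ℝ := if u ∈ A then 1 else 0

variable {G}

lemma ww_nonneg (A B : Finset G.V) : 0 ≤ ww G A B :=
  Finset.sum_nonneg fun a _ => Finset.sum_nonneg fun b _ => G.w_nonneg a b

lemma cutCost_nonneg (C : Finset G.V) : 0 ≤ cutCost G C :=
  Finset.sum_nonneg fun a _ => Finset.sum_nonneg fun b _ => G.w_nonneg a b

lemma le_ww {A B : Finset G.V} {a b : G.V} (ha : a ∈ A) (hb : b ∈ B) :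
    G.w a b ≤ ww G A B :=
  calc G.w a b ≤ ∑ b' ∈ B, G.w a b' :=
        Finset.single_le_sum (fun b' _ => G.w_nonneg a b') hb
    _ ≤ ww G A B := Finset.single_le_sum
        (fun a' _ => Finset.sum_nonneg fun b' _ => G.w_nonneg a' b') ha

lemma sum_χ_mul (A : Finset G.V) (f : G.V → ℝ) :
    ∑ v : G.V, χ G A v * f v = ∑ v ∈ A, f v := by
  simp [χ, ite_mul, Finset.sum_ite_mem]

lemma χ_compl (C : Finset G.V) (v : G.V) : χ G Cᶜ v = 1 - χ G C v := by
  unfold χ; by_cases h : v ∈ C <;> simp [h]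

lemma cutCost_eq (C : Finset G.V) :
    cutCost G C = ∑ u : G.V, ∑ v : G.V, χ G C u * (1 - χ G C v) * G.w u v := by
  rw [cutCost, ← sum_χ_mul C (fun u => ∑ v ∈ Cᶜ, G.w u v)]
  refine Finset.sum_congr rfl fun u _ => ?_
  rw [← sum_χ_mul Cᶜ (G.w u), Finset.mul_sum]
  refine Finset.sum_congr rfl fun v _ => ?_
  rw [χ_compl]; ring

lemma ww_eq (A B : Finset G.V) :
    ww G A B = ∑ u : G.V, ∑ v : G.V, χ G A u * χ G B v * G.w u v := by
  rw [ww, ← sum_χ_mul A (fun u => ∑ v ∈ B, G.w u v)]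
  refine Finset.sum_congr rfl fun u _ => ?_
  rw [← sum_χ_mul B (G.w u), Finset.mul_sum]
  exact Finset.sum_congr rfl fun v _ => by ring

lemma cutCost_compl (C : Finset G.V) : cutCost G Cᶜ = cutCost G C := by
  rw [cutCost, cutCost, compl_compl, Finset.sum_comm]
  exact Finset.sum_congr rfl fun u _ => Finset.sum_congr rfl fun v _ => G.w_symm v u

lemma cutCost_empty : cutCost G (∅ : Finset G.V) = 0 := by simp [cutCost]

lemma submodular (A B : Finset G.V) :
    cutCost G (A ∪ B) + cutCost G (A ∩ B)
      + (ww G (A \ B) (B \ A) + ww G (B \ A) (A \ B))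
      = cutCost G A + cutCost G B := by
  simp only [cutCost_eq, ww_eq, ← Finset.sum_add_distrib]
  refine Finset.sum_congr rfl fun u _ => Finset.sum_congr rfl fun v _ => ?_
  unfold χ
  by_cases h1 : u ∈ A <;> by_cases h2 : u ∈ B <;> by_cases h3 : v ∈ A <;> by_cases h4 : v ∈ B <;>
    simp [h1, h2, h3, h4, Finset.mem_union, Finset.mem_inter, Finset.mem_sdiff]

lemma posimodular (A B : Finset G.V) :
    cutCost G (A \ B) + cutCost G (B \ A)
      + (ww G (A ∩ B) ((A ∪ B)ᶜ) + ww G ((A ∪ B)ᶜ) (A ∩ B))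
      = cutCost G A + cutCost G B := by
  have e1 : A ∪ Bᶜ = (B \ A)ᶜ := by ext x; simp [Finset.mem_sdiff]; tauto
  have e2 : A ∩ Bᶜ = A \ B := by ext x; simp [Finset.mem_sdiff]
  have e3 : A \ Bᶜ = A ∩ B := by ext x; simp [Finset.mem_sdiff]
  have e4 : Bᶜ \ A = (A ∪ B)ᶜ := by ext x; simp [Finset.mem_sdiff]; tauto
  have h := submodular (G := G) A Bᶜ
  rw [e1, e2, e3, e4, cutCost_compl, cutCost_compl] at h
  linarith

lemma cutCost_union_of_disjoint {A B : Finset G.V} (h : Disjoint A B) :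
    cutCost G (A ∪ B) + (ww G A B + ww G B A) = cutCost G A + cutCost G B := by
  have hs := submodular (G := G) A B
  rw [Finset.disjoint_iff_inter_eq_empty.mp h, cutCost_empty,
    h.sdiff_eq_left, h.sdiff_eq_right] at hs
  linarith

end Aux
section Aux2

open Finset

variable {N : ℕ} {G : GraphModel N}

lemma isCut_union {Y Z : PSet N} {A B : Finset G.V}
    (hA : IsCut G Y A) (hB : IsCut G Z B) : IsCut G (Y ∪ Z) (A ∪ B) := by
  intro v ℓ hv
  simp [Finset.mem_union, hA v ℓ hv, hB v ℓ hv]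

lemma isCut_inter {Y : PSet N} {A B : Finset G.V}
    (hA : IsCut G Y A) (hB : IsCut G Y B) : IsCut G Y (A ∩ B) := by
  intro v ℓ hv
  simp [Finset.mem_inter, hA v ℓ hv, hB v ℓ hv]

lemma isCut_union_same {Y : PSet N} {A B : Finset G.V}
    (hA : IsCut G Y A) (hB : IsCut G Y B) : IsCut G Y (A ∪ B) := by
  intro v ℓ hv
  simp [Finset.mem_union, hA v ℓ hv, hB v ℓ hv]

lemma isCut_sdiff {Y Z : PSet N} {A B : Finset G.V} (hYZ : Disjoint Y Z)
    (hA : IsCut G Y A) (hB : IsCut G Z B) : IsCut G Y (A \ B) := by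
  intro v ℓ hv
  rw [Finset.mem_sdiff, hA v ℓ hv, hB v ℓ hv]
  exact ⟨fun h => h.1, fun h => ⟨h, fun hz => Finset.disjoint_left.mp hYZ h hz⟩⟩

lemma exists_isCut (Y : PSet N) : ∃ C : Finset G.V, IsCut G Y C := by
  classical
  refine ⟨Finset.univ.filter (fun v => ∃ ℓ ∈ Y, G.label v = some ℓ), fun v ℓ hv => ?_⟩
  simp only [Finset.mem_filter, Finset.mem_univ, true_and]
  constructor
  · rintro ⟨ℓ', hℓ', hv'⟩
    obtain rfl : ℓ = ℓ' := Option.some_injective _ (hv.symm.trans hv')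
    exact hℓ'
  · exact fun h => ⟨ℓ, h, hv⟩

lemma gEntropy_le {Y : PSet N} {C : Finset G.V} (h : IsCut G Y C) :
    gEntropy G Y ≤ cutCost G C :=
  csInf_le (Set.toFinite _).bddBelow ⟨C, h, rfl⟩

lemma exists_minCut (Y : PSet N) :
    ∃ C : Finset G.V, IsMinCut G Y C ∧ gEntropy G Y = cutCost G C := by
  obtain ⟨C0, hC0⟩ := exists_isCut (G := G) Y
  have hne : (cutCost G '' {C : Finset G.V | IsCut G Y C}).Nonempty := ⟨_, C0, hC0, rfl⟩
  obtain ⟨C, hC, hCeq⟩ := hne.csInf_mem (Set.toFinite _)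
  exact ⟨C, ⟨hC, fun C' h' => hCeq ▸ gEntropy_le h'⟩, hCeq.symm⟩

lemma gEntropy_eq {Y : PSet N} {C : Finset G.V} (h : IsMinCut G Y C) :
    gEntropy G Y = cutCost G C := by
  obtain ⟨C0, hC0, hC0eq⟩ := exists_minCut (G := G) Y
  exact hC0eq.trans (le_antisymm (hC0.2 C h.1) (h.2 C0 hC0.1))

lemma minCut_inter {Y : PSet N} {A B : Finset G.V}
    (hA : IsMinCut G Y A) (hB : IsMinCut G Y B) : IsMinCut G Y (A ∩ B) := by
  have hs := submodular (G := G) A B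
  have hU := hA.2 (A ∪ B) (isCut_union_same hA.1 hB.1)
  refine ⟨isCut_inter hA.1 hB.1, fun C' hC' => ?_⟩
  have hB2 := hB.2 C' hC'
  have n1 := ww_nonneg (G := G) (A \ B) (B \ A)
  have n2 := ww_nonneg (G := G) (B \ A) (A \ B)
  linarith

lemma minimalMinCut_subset {Y : PSet N} {A B : Finset G.V}
    (hA : IsMinimalMinCut G Y A) (hB : IsMinCut G Y B) : A ⊆ B := by
  have h := hA.2 (A ∩ B) (minCut_inter hA.1 hB) Finset.inter_subset_left
  intro x hx
  rw [← h] at hx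
  exact (Finset.mem_inter.mp hx).2

lemma minimalMinCut_unique {Y : PSet N} {A B : Finset G.V}
    (hA : IsMinimalMinCut G Y A) (hB : IsMinimalMinCut G Y B) : A = B :=
  Finset.Subset.antisymm (minimalMinCut_subset hA hB.1) (minimalMinCut_subset hB hA.1)

lemma reaches_symm {C : Finset G.V} {a b : G.V} (h : Reaches G C a b) :
    Reaches G C b a := by
  refine @Std.Symm.symm _ _ (@Relation.ReflTransGen.stdSymm _ (fun a b : G.V => a ∈ C ∧ b ∈ C ∧ 0 < G.w a b) ?_) _ _ h
  constructor
  rintro x y ⟨hx, hy, hw⟩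
  exact ⟨hy, hx, by rw [G.w_symm]; exact hw⟩

lemma compOf_subset {C D : Finset G.V} (h : IsCompOf G C D) : D ⊆ C := by
  obtain ⟨v, hv, hD⟩ := h
  exact fun u hu => ((hD u).mp hu).1

lemma compOf_eq_of_mem {C D1 D2 : Finset G.V} (h1 : IsCompOf G C D1)
    (h2 : IsCompOf G C D2) {x : G.V} (hx1 : x ∈ D1) (hx2 : x ∈ D2) : D1 = D2 := by
  obtain ⟨v1, hv1, hD1⟩ := h1
  obtain ⟨v2, hv2, hD2⟩ := h2
  have hr1 : Reaches G C v1 x := ((hD1 x).mp hx1).2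
  have hr2 : Reaches G C v2 x := ((hD2 x).mp hx2).2
  ext u
  rw [hD1 u, hD2 u]
  constructor
  · rintro ⟨hu, hr⟩
    exact ⟨hu, (hr2.trans (reaches_symm hr1)).trans hr⟩
  · rintro ⟨hu, hr⟩
    exact ⟨hu, (hr1.trans (reaches_symm hr2)).trans hr⟩

lemma compOf_closed {C D : Finset G.V} (h : IsCompOf G C D) {a b : G.V}
    (ha : a ∈ D) (hb : b ∈ C) (hw : 0 < G.w a b) : b ∈ D := by
  obtain ⟨v, hv, hD⟩ := h
  obtain ⟨haC, hr⟩ := (hD a).mp ha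
  exact (hD b).mpr ⟨hb, hr.tail ⟨haC, hb, hw⟩⟩

lemma exists_compOf_mem {C : Finset G.V} {u : G.V} (hu : u ∈ C) :
    ∃ D : Finset G.V, IsCompOf G C D ∧ u ∈ D := by
  classical
  refine ⟨Finset.univ.filter (fun x => x ∈ C ∧ Reaches G C u x), ⟨u, hu, fun x => ?_⟩, ?_⟩
  · simp [Finset.mem_filter]
  · simp only [Finset.mem_filter, Finset.mem_univ, true_and]
    exact ⟨hu, Relation.ReflTransGen.refl⟩

lemma reaches_stay {C A B : Finset G.V} (hsub : ∀ x ∈ C, x ∈ A ∨ x ∈ B)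
    (hzero : ∀ a ∈ A, ∀ b ∈ B, G.w a b = 0) {v u : G.V}
    (h : Reaches G C v u) (hv : v ∈ A) : u ∈ A := by
  induction h with
  | refl => exact hv
  | tail _ hstep ih =>
    obtain ⟨hb, hc, hw⟩ := hstep
    rcases hsub _ hc with h' | h'
    · exact h'
    · exact absurd (hzero _ ih _ h') (ne_of_gt hw)

end Aux2
/-- Let `G` be a simple graph model, `X` a nonempty subsystem, and
`{X_1,…,X_m}` a partition of `X` such that the vertex sets of the connected components
of `G_X` are exactly `mC_{X_1},…,mC_{X_m}`.  Then for disjoint nonempty `Y, Z` with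
`Y ∪ Z = X`: `I(Y:Z) = 0` iff `m ≥ 2` and each `X_i` satisfies `X_i ⊆ Y` or `X_i ⊆ Z`. -/
theorem statement3 {N : ℕ} (hN : 2 ≤ N) (G : GraphModel N) (hG : IsSimple G)
    (X : PSet N) (hX : X.Nonempty)
    (CX : Finset G.V) (hCX : IsMinimalMinCut G X CX)
    (Pr : Finset (PSet N))
    (hne : ∀ p ∈ Pr, p.Nonempty)
    (hdisj : ∀ p ∈ Pr, ∀ q ∈ Pr, p ≠ q → p ∩ q = ∅)
    (hcover : Pr.sup id = X)
    (hcomp₁ : ∀ p ∈ Pr, ∃ D : Finset G.V, IsMinimalMinCut G p D ∧ IsCompOf G CX D)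
    (hcomp₂ : ∀ D : Finset G.V, IsCompOf G CX D → ∃ p ∈ Pr, IsMinimalMinCut G p D)
    (Y Z : PSet N) (hY : Y.Nonempty) (hZ : Z.Nonempty) (hYZ : Disjoint Y Z)
    (hunion : Y ∪ Z = X) :
    gMI G Y Z = 0 ↔ (2 ≤ Pr.card ∧ ∀ p ∈ Pr, p ⊆ Y ∨ p ⊆ Z) := by
  classical
  choose! D hD using hcomp₁
  have hDmm : ∀ p ∈ Pr, IsMinimalMinCut G p (D p) := fun p hp => (hD p hp).1
  have hDcomp : ∀ p ∈ Pr, IsCompOf G CX (D p) := fun p hp => (hD p hp).2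
  have hDcut : ∀ p ∈ Pr, IsCut G p (D p) := fun p hp => (hDmm p hp).1.1
  have hDsub : ∀ p ∈ Pr, D p ⊆ CX := fun p hp => compOf_subset (hDcomp p hp)
  have hpeq : ∀ p ∈ Pr, ∀ q ∈ Pr, ∀ x : G.V, x ∈ D p → x ∈ D q → p = q := by
    intro p hp q hq x hxp hxq
    have hDeq : D p = D q := compOf_eq_of_mem (hDcomp p hp) (hDcomp q hq) hxp hxq
    apply Finset.Subset.antisymm
    · intro ℓ hℓ
      obtain ⟨v, hv⟩ := G.label_surj ℓ
      have hvD : v ∈ D p := (hDcut p hp v ℓ hv).mpr hℓ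
      exact (hDcut q hq v ℓ hv).mp (hDeq ▸ hvD)
    · intro ℓ hℓ
      obtain ⟨v, hv⟩ := G.label_surj ℓ
      have hvD : v ∈ D q := (hDcut q hq v ℓ hv).mpr hℓ
      exact (hDcut p hp v ℓ hv).mp (hDeq.symm ▸ hvD)
  have hcoverD : ∀ u ∈ CX, ∃ p ∈ Pr, u ∈ D p := by
    intro u hu
    obtain ⟨D', hD', huD'⟩ := exists_compOf_mem hu
    obtain ⟨p, hp, hmm⟩ := hcomp₂ D' hD'
    exact ⟨p, hp, (minimalMinCut_unique (hDmm p hp) hmm) ▸ huD'⟩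
  have hmemX : ∀ ℓ ∈ X, ∃ p ∈ Pr, ℓ ∈ p := by
    intro ℓ hℓ
    rw [← hcover] at hℓ
    simpa using Finset.mem_sup.mp hℓ
  constructor
  · -- forward direction
    intro hMI
    unfold gMI at hMI
    rw [hunion] at hMI
    obtain ⟨MY, hMY, hMYe⟩ := exists_minCut (G := G) Y
    obtain ⟨MZ, hMZ, hMZe⟩ := exists_minCut (G := G) Z
    set A := MY \ MZ with hA
    set B := MZ \ MY with hB
    have hAcut : IsCut G Y A := isCut_sdiff hYZ hMY.1 hMZ.1
    have hBcut : IsCut G Z B := isCut_sdiff hYZ.symm hMZ.1 hMY.1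
    have hposi := posimodular (G := G) MY MZ
    have hAge : gEntropy G Y ≤ cutCost G A := gEntropy_le hAcut
    have hBge : gEntropy G Z ≤ cutCost G B := gEntropy_le hBcut
    have n1 := ww_nonneg (G := G) (MY ∩ MZ) ((MY ∪ MZ)ᶜ)
    have n2 := ww_nonneg (G := G) ((MY ∪ MZ)ᶜ) (MY ∩ MZ)
    have hAc : cutCost G A = gEntropy G Y := by linarith
    have hBc : cutCost G B = gEntropy G Z := by linarith
    have hABdisj : Disjoint A B := disjoint_sdiff_sdiff
    have hdu := cutCost_union_of_disjoint (G := G) hABdisj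
    have hUcut : IsCut G X (A ∪ B) := by
      have h := isCut_union hAcut hBcut
      rwa [hunion] at h
    have hUge : gEntropy G X ≤ cutCost G (A ∪ B) := gEntropy_le hUcut
    have n3 := ww_nonneg (G := G) A B
    have n4 := ww_nonneg (G := G) B A
    have hwAB : ww G A B = 0 := by linarith
    have hwBA : ww G B A = 0 := by linarith
    have hUmin : IsMinCut G X (A ∪ B) := by
      refine ⟨hUcut, fun C' hC' => ?_⟩
      have h := gEntropy_le (G := G) hC'
      linarith
    have hCXsub : CX ⊆ A ∪ B := minimalMinCut_subset hCX hUmin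
    have hzeroAB : ∀ a ∈ A, ∀ b ∈ B, G.w a b = 0 := fun a ha b hb =>
      le_antisymm (hwAB ▸ le_ww ha hb) (G.w_nonneg a b)
    have hzeroBA : ∀ b ∈ B, ∀ a ∈ A, G.w b a = 0 := fun b hb a ha =>
      le_antisymm (hwBA ▸ le_ww hb ha) (G.w_nonneg b a)
    have hsubAB : ∀ x ∈ CX, x ∈ A ∨ x ∈ B := fun x hx => Finset.mem_union.mp (hCXsub hx)
    have hsubBA : ∀ x ∈ CX, x ∈ B ∨ x ∈ A := fun x hx => (hsubAB x hx).symm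
    have hsplit : ∀ p ∈ Pr, p ⊆ Y ∨ p ⊆ Z := by
      intro p hp
      obtain ⟨r, hrCX, hchar⟩ := hDcomp p hp
      rcases hsubAB r hrCX with hrA | hrB
      · left
        intro ℓ hℓ
        obtain ⟨v, hv⟩ := G.label_surj ℓ
        have hvD : v ∈ D p := (hDcut p hp v ℓ hv).mpr hℓ
        have hvA : v ∈ A := reaches_stay hsubAB hzeroAB ((hchar v).mp hvD).2 hrA
        exact (hAcut v ℓ hv).mp hvA
      · right
        intro ℓ hℓ
        obtain ⟨v, hv⟩ := G.label_surj ℓ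
        have hvD : v ∈ D p := (hDcut p hp v ℓ hv).mpr hℓ
        have hvB : v ∈ B := reaches_stay hsubBA hzeroBA ((hchar v).mp hvD).2 hrB
        exact (hBcut v ℓ hv).mp hvB
    refine ⟨?_, hsplit⟩
    obtain ⟨ℓY, hℓY⟩ := hY
    obtain ⟨ℓZ, hℓZ⟩ := hZ
    obtain ⟨p, hp, hℓYp⟩ := hmemX ℓY (hunion ▸ Finset.mem_union_left Z hℓY)
    obtain ⟨q, hq, hℓZq⟩ := hmemX ℓZ (hunion ▸ Finset.mem_union_right Y hℓZ)
    have hpY : p ⊆ Y := by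
      rcases hsplit p hp with h | h
      · exact h
      · exact absurd (h hℓYp) (Finset.disjoint_left.mp hYZ hℓY)
    have hqZ : q ⊆ Z := by
      rcases hsplit q hq with h | h
      · exact absurd (Finset.disjoint_left.mp hYZ (h hℓZq)) (fun hh => hh hℓZ)
      · exact h
    refine Finset.one_lt_card.mpr ⟨p, hp, q, hq, fun hpq => ?_⟩
    exact Finset.disjoint_left.mp hYZ (hpY hℓYp) (hqZ (hpq ▸ hℓYp))
  · -- backward direction
    rintro ⟨-, hsplit⟩
    set CY := (Pr.filter (fun p => p ⊆ Y)).biUnion D with hCYdef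
    set CZ := (Pr.filter (fun p => ¬ p ⊆ Y)).biUnion D with hCZdef
    have hmemCY : ∀ v : G.V, v ∈ CY ↔ ∃ p ∈ Pr, p ⊆ Y ∧ v ∈ D p := by
      intro v
      simp [hCYdef, Finset.mem_biUnion, Finset.mem_filter, and_assoc]
    have hmemCZ : ∀ v : G.V, v ∈ CZ ↔ ∃ p ∈ Pr, ¬ p ⊆ Y ∧ v ∈ D p := by
      intro v
      simp [hCZdef, Finset.mem_biUnion, Finset.mem_filter, and_assoc]
    have hsubZof : ∀ p ∈ Pr, ¬ p ⊆ Y → p ⊆ Z := fun p hp h => (hsplit p hp).resolve_left h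
    have hCYcut : IsCut G Y CY := by
      intro v ℓ hv
      rw [hmemCY]
      constructor
      · rintro ⟨p, hp, hpY, hvD⟩
        exact hpY ((hDcut p hp v ℓ hv).mp hvD)
      · intro hℓ
        obtain ⟨p, hp, hℓp⟩ := hmemX ℓ (hunion ▸ Finset.mem_union_left Z hℓ)
        have hpY : p ⊆ Y := by
          rcases hsplit p hp with h | h
          · exact h
          · exact absurd (h hℓp) (Finset.disjoint_left.mp hYZ hℓ)
        exact ⟨p, hp, hpY, (hDcut p hp v ℓ hv).mpr hℓp⟩
    have hCZcut : IsCut G Z CZ := by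
      intro v ℓ hv
      rw [hmemCZ]
      constructor
      · rintro ⟨p, hp, hpnY, hvD⟩
        exact hsubZof p hp hpnY ((hDcut p hp v ℓ hv).mp hvD)
      · intro hℓ
        obtain ⟨p, hp, hℓp⟩ := hmemX ℓ (hunion ▸ Finset.mem_union_right Y hℓ)
        have hpnY : ¬ p ⊆ Y := fun h => Finset.disjoint_left.mp hYZ (h hℓp) hℓ
        exact ⟨p, hp, hpnY, (hDcut p hp v ℓ hv).mpr hℓp⟩
    have hdisjC : Disjoint CY CZ := by
      rw [Finset.disjoint_left]
      intro x hx hx'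
      obtain ⟨p, hp, hpY, hxp⟩ := (hmemCY x).mp hx
      obtain ⟨q, hq, hqnY, hxq⟩ := (hmemCZ x).mp hx'
      exact hqnY ((hpeq p hp q hq x hxp hxq) ▸ hpY)
    have hunionC : CY ∪ CZ = CX := by
      apply Finset.Subset.antisymm
      · intro x hx
        rcases Finset.mem_union.mp hx with h | h
        · obtain ⟨p, hp, _, hxp⟩ := (hmemCY x).mp h
          exact hDsub p hp hxp
        · obtain ⟨p, hp, _, hxp⟩ := (hmemCZ x).mp h
          exact hDsub p hp hxp
      · intro x hx
        obtain ⟨p, hp, hxp⟩ := hcoverD x hx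
        by_cases h : p ⊆ Y
        · exact Finset.mem_union_left _ ((hmemCY x).mpr ⟨p, hp, h, hxp⟩)
        · exact Finset.mem_union_right _ ((hmemCZ x).mpr ⟨p, hp, h, hxp⟩)
    have hcross : ∀ a ∈ CY, ∀ b ∈ CZ, G.w a b = 0 := by
      intro a ha b hb
      by_contra hne0
      have hw : 0 < G.w a b := lt_of_le_of_ne (G.w_nonneg a b) (Ne.symm hne0)
      obtain ⟨p, hp, hpY, hap⟩ := (hmemCY a).mp ha
      obtain ⟨q, hq, hqnY, hbq⟩ := (hmemCZ b).mp hb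
      have hbp : b ∈ D p := compOf_closed (hDcomp p hp) hap (hDsub q hq hbq) hw
      exact hqnY ((hpeq p hp q hq b hbp hbq) ▸ hpY)
    have hwYZ : ww G CY CZ = 0 :=
      Finset.sum_eq_zero fun a ha => Finset.sum_eq_zero fun b hb => hcross a ha b hb
    have hwZY : ww G CZ CY = 0 :=
      Finset.sum_eq_zero fun b hb => Finset.sum_eq_zero fun a ha => by
        rw [G.w_symm]
        exact hcross a ha b hb
    have hdu := cutCost_union_of_disjoint (G := G) hdisjC
    rw [hunionC, hwYZ, hwZY] at hdu
    have hSX : gEntropy G X = cutCost G CX := gEntropy_eq hCX.1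
    have hminY : IsMinCut G Y CY := by
      refine ⟨hCYcut, fun C' hC' => ?_⟩
      have hs := submodular (G := G) C' CZ
      have hXcut : IsCut G X (C' ∪ CZ) := by
        have h := isCut_union hC' hCZcut
        rwa [hunion] at h
      have h1 := gEntropy_le (G := G) hXcut
      have h2 := cutCost_nonneg (G := G) (C' ∩ CZ)
      have n1 := ww_nonneg (G := G) (C' \ CZ) (CZ \ C')
      have n2 := ww_nonneg (G := G) (CZ \ C') (C' \ CZ)
      linarith
    have hminZ : IsMinCut G Z CZ := by
      refine ⟨hCZcut, fun C' hC' => ?_⟩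
      have hs := submodular (G := G) C' CY
      have hXcut : IsCut G X (C' ∪ CY) := by
        have h := isCut_union hC' hCYcut
        rwa [Finset.union_comm Z Y, hunion] at h
      have h1 := gEntropy_le (G := G) hXcut
      have h2 := cutCost_nonneg (G := G) (C' ∩ CY)
      have n1 := ww_nonneg (G := G) (C' \ CY) (CY \ C')
      have n2 := ww_nonneg (G := G) (CY \ C') (C' \ CY)
      linarith
    unfold gMI
    rw [hunion, gEntropy_eq hminY, gEntropy_eq hminZ, hSX]
    linarith
end HEC
end

section
/- For every N ≥ 2 and every KC-PMI P on N parties, P̄ equals the up-set in the MI-poset generated by the union of all essential β-sets, and also equals the up-set generated by the union of all positive β-sets; that is, P̄ = { m ∈ M_N : ∃ m' ⪯ m with m' ∈ β(X) for some essential β(X) } = { m ∈ M_N : ∃ m' ⪯ m with m' ∈ β(X) for some positive β(X) }. -/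
namespace HEC

/-- MI instances: unordered pairs of subsets of parties. -/
abbrev MI (N : ℕ) := Sym2 (PSet N)

/-- `m` is an MI instance, i.e. an unordered pair of disjoint nonempty subsets of `⟦N⟧`. -/
def IsMIInst {N : ℕ} (m : MI N) : Prop :=
  ∃ Y Z : PSet N, m = s(Y, Z) ∧ Y.Nonempty ∧ Z.Nonempty ∧ Disjoint Y Z

/-- The MI-poset order: `{Y,Z} ⪯ {Y',Z'}` iff (`Y ⊆ Y'` and `Z ⊆ Z'`) or
(`Y ⊆ Z'` and `Z ⊆ Y'`).  (The two cases are absorbed by the existential over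
representatives of the unordered pairs.) -/
def MIle {N : ℕ} (m m' : MI N) : Prop :=
  ∃ Y Z Y' Z' : PSet N, m = s(Y, Z) ∧ m' = s(Y', Z') ∧ Y ⊆ Y' ∧ Z ⊆ Z'

/-- An `N`-party entropy vector, extended to all subsets of `⟦N⟧` by the purification
convention: `S ∅ = 0` and `S Y = S (⟦N⟧ \ Y)` whenever `0 ∈ Y`. -/
structure EntropyVec (N : ℕ) where
  S : PSet N → ℝ
  S_empty : S ∅ = 0
  S_purify : ∀ Y : PSet N, (0 : Party N) ∈ Y → S Y = S (Finset.univ \ Y)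

/-- Mutual information `I(Y:Z) = S_Y + S_Z - S_{Y∪Z}`. -/
def EntropyVec.I {N : ℕ} (v : EntropyVec N) (Y Z : PSet N) : ℝ :=
  v.S Y + v.S Z - v.S (Y ∪ Z)

/-- Membership in the subadditivity cone: `I(Y:Z) ≥ 0` for every MI instance. -/
def EntropyVec.InSAC {N : ℕ} (v : EntropyVec N) : Prop :=
  ∀ Y Z : PSet N, Y.Nonempty → Z.Nonempty → Disjoint Y Z → 0 ≤ v.I Y Z

/-- The pattern of marginal independence of `v`: the MI instances vanishing on `v`. -/
def EntropyVec.PMI {N : ℕ} (v : EntropyVec N) : Set (MI N) :=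
  {m | ∃ Y Z : PSet N, m = s(Y, Z) ∧ Y.Nonempty ∧ Z.Nonempty ∧ Disjoint Y Z ∧ v.I Y Z = 0}

/-- `P` is a down-set in the MI-poset. -/
def IsMIDownSet {N : ℕ} (P : Set (MI N)) : Prop :=
  ∀ m m' : MI N, IsMIInst m → m' ∈ P → MIle m m' → m ∈ P

/-- `P` is a KC-PMI: the PMI of some entropy vector in the subadditivity cone,
which moreover is a down-set in the MI-poset. -/
def IsKCPMI {N : ℕ} (P : Set (MI N)) : Prop :=
  (∃ v : EntropyVec N, v.InSAC ∧ P = v.PMI) ∧ IsMIDownSet P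

/-- The β-set of `X`: all MI instances `{Y,Z}` with `Y ∪ Z = X`. -/
def betaSet {N : ℕ} (X : PSet N) : Set (MI N) :=
  {m | ∃ Y Z : PSet N, m = s(Y, Z) ∧ Y.Nonempty ∧ Z.Nonempty ∧ Disjoint Y Z ∧ Y ∪ Z = X}

/-- The antichain `A` of minimal elements of `P̄ = M_N ∖ P`. -/
def minimalMI {N : ℕ} (P : Set (MI N)) : Set (MI N) :=
  {m | IsMIInst m ∧ m ∉ P ∧ ∀ m' : MI N, IsMIInst m' → m' ∉ P → MIle m' m → m' = m}

/-- `β(X)` is positive: `β(X) ⊆ P̄`. -/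
def BPos {N : ℕ} (P : Set (MI N)) (X : PSet N) : Prop :=
  ∀ m ∈ betaSet X, m ∉ P

/-- `β(X)` is vanishing: `β(X) ⊆ P`. -/
def BVan {N : ℕ} (P : Set (MI N)) (X : PSet N) : Prop :=
  betaSet X ⊆ P

/-- `β(X)` is partial: it has elements both in `P` and in `P̄`. -/
def BPart {N : ℕ} (P : Set (MI N)) (X : PSet N) : Prop :=
  (∃ m ∈ betaSet X, m ∈ P) ∧ (∃ m ∈ betaSet X, m ∉ P)

/-- `β(X)` is essential: `β(X) ∩ A ≠ ∅`. -/
def BEss {N : ℕ} (P : Set (MI N)) (X : PSet N) : Prop :=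
  ∃ m ∈ betaSet X, m ∈ minimalMI P

/-- `β(X)` is completely essential: `β(X) ⊆ A`. -/
def BCEss {N : ℕ} (P : Set (MI N)) (X : PSet N) : Prop :=
  betaSet X ⊆ minimalMI P

/-- `β(X)` is non-essential: `β(X) ∩ A = ∅`. -/
def BNEss {N : ℕ} (P : Set (MI N)) (X : PSet N) : Prop :=
  ∀ m ∈ betaSet X, m ∉ minimalMI P

/-- `pos_<(Y)`: the proper subsystems `Z ⊊ Y` with `|Z| ≥ 2` and `β(Z)` positive. -/
def posBelow {N : ℕ} (P : Set (MI N)) (Y : PSet N) : Set (PSet N) :=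
  {Z | Z ⊂ Y ∧ 2 ≤ Z.card ∧ BPos P Z}

/-- `Max(pos_<(Y))`: the inclusion-maximal elements of `pos_<(Y)`. -/
def maxPosBelow {N : ℕ} (P : Set (MI N)) (Y : PSet N) : Set (PSet N) :=
  {Z | Z ∈ posBelow P Y ∧ ∀ Z' ∈ posBelow P Y, Z ⊆ Z' → Z = Z'}

/-- The MI instance `m = {Y,Z}` splits `X` if `X ∩ Y ≠ ∅` and `X ∩ Z ≠ ∅`. -/
def Splits {N : ℕ} (m : MI N) (X : PSet N) : Prop :=
  ∃ Y Z : PSet N, m = s(Y, Z) ∧ (X ∩ Y).Nonempty ∧ (X ∩ Z).Nonempty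

/-- The hyperedges of the correlation hypergraph `H_P`: one hyperedge `e_X` for each
`X ⊆ ⟦N⟧` (with `|X| ≥ 2`) whose β-set is positive.  Vertices `v_ℓ` are identified
with the parties `ℓ ∈ ⟦N⟧`, and hyperedges with the corresponding subsystems. -/
def Hedge {N : ℕ} (P : Set (MI N)) : Set (PSet N) :=
  {X | 2 ≤ X.card ∧ BPos P X}

/-- The hyperedges of the sub-hypergraph `H_Y`: the hyperedges `e_Z` with `Z ⊊ Y`. -/
def subEdges {N : ℕ} (P : Set (MI N)) (Y : PSet N) : Set (PSet N) :=
  {Z | Z ⊂ Y ∧ Z ∈ Hedge P}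

/-- One step in a hypergraph with hyperedge set `E`: `a` and `b` lie in a common
hyperedge. -/
def hStep {N : ℕ} (E : Set (PSet N)) (a b : Party N) : Prop :=
  ∃ e ∈ E, a ∈ e ∧ b ∈ e

/-- Connectivity of the hypergraph with vertex set `V` and hyperedge set `E`:
every two vertices are joined by a path (a one-vertex hypergraph is connected). -/
def hConn {N : ℕ} (V : PSet N) (E : Set (PSet N)) : Prop :=
  ∀ a ∈ V, ∀ b ∈ V, Relation.ReflTransGen (hStep E) a b

/-- The vertex set of the connected component of `a` in the hypergraph with
vertex set `V` and hyperedge set `E`. -/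
def hComp {N : ℕ} (V : PSet N) (E : Set (PSet N)) (a : Party N) : Set (Party N) :=
  {b | b ∈ V ∧ Relation.ReflTransGen (hStep E) a b}

/-- A clique of the line graph `L_{H_P}`: a set of hyperedges of `H_P` which are
pairwise adjacent (distinct hyperedges being adjacent iff they intersect). -/
def IsLineClique {N : ℕ} (P : Set (MI N)) (Q : Set (PSet N)) : Prop :=
  Q ⊆ Hedge P ∧ ∀ e ∈ Q, ∀ f ∈ Q, e ≠ f → (e ∩ f).Nonempty

/-- A max-clique of the line graph `L_{H_P}`: a (nonempty) clique which is maximal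
under inclusion. -/
def IsMaxClique {N : ℕ} (P : Set (MI N)) (Q : Set (PSet N)) : Prop :=
  Q.Nonempty ∧ IsLineClique P Q ∧ ∀ Q' : Set (PSet N), IsLineClique P Q' → Q ⊆ Q' → Q = Q'

/-- `Q^∩`: the intersection of the hyperedges in `Q`, viewed as sets of vertices. -/
def qInter {N : ℕ} (Q : Set (PSet N)) : Set (Party N) :=
  {ℓ | ∀ e ∈ Q, ℓ ∈ e}

/-! Every element of `P̄` lies above a minimal one, and the β-set of a minimal `{Y₀, Z₀}` is
positive: if `{Y, Z}` in the same β-set vanished, subadditivity would bound `I(Y₀:Z₀) > 0` by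
`I(Y:Z)` plus the mutual informations of the restrictions of `{Y₀, Z₀}` to `Y` and to `Z`, all of
which vanish (the first by assumption, the others by minimality). Hence `P̄` is generated as an
up-set by any family of β-sets between the essential and the positive ones. -/

section MIPoset

variable {N : ℕ}

lemma MIle_refl {m : MI N} (hm : IsMIInst m) : MIle m m := by
  obtain ⟨Y, Z, rfl, -, -, -⟩ := hm
  exact ⟨Y, Z, Y, Z, rfl, rfl, subset_rfl, subset_rfl⟩

lemma MIle_trans {a b c : MI N} (hab : MIle a b) (hbc : MIle b c) : MIle a c := by
  obtain ⟨Y, Z, Y', Z', rfl, rfl, hY, hZ⟩ := hab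
  obtain ⟨W, V, W', V', hb, rfl, hW, hV⟩ := hbc
  rcases Sym2.eq_iff.mp hb with ⟨rfl, rfl⟩ | ⟨rfl, rfl⟩
  · exact ⟨Y, Z, W', V', rfl, rfl, hY.trans hW, hZ.trans hV⟩
  · exact ⟨Z, Y, W', V', Sym2.eq_swap, rfl, hZ.trans hW, hY.trans hV⟩

def miSize : MI N → ℕ :=
  Sym2.lift ⟨fun Y Z => Y.card + Z.card, fun _ _ => add_comm _ _⟩

lemma miSize_lt_of_MIle {a b : MI N} (hab : MIle a b) (hne : a ≠ b) : miSize a < miSize b := by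
  obtain ⟨Y, Z, Y', Z', rfl, rfl, hY, hZ⟩ := hab
  have hYc := Finset.card_le_card hY
  have hZc := Finset.card_le_card hZ
  refine lt_of_le_of_ne (Nat.add_le_add hYc hZc) fun hEq => hne ?_
  change Y.card + Z.card = Y'.card + Z'.card at hEq
  rw [Finset.eq_of_subset_of_card_le hY (by omega), Finset.eq_of_subset_of_card_le hZ (by omega)]

lemma exists_minimalMI_MIle (P : Set (MI N)) {m : MI N} (hm : IsMIInst m) (hmP : m ∉ P) :
    ∃ m₀ ∈ minimalMI P, MIle m₀ m := by
  obtain ⟨m₀, ⟨hm₀, hm₀P, hm₀m⟩, hmin⟩ := (measure (miSize (N := N))).wf.has_min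
    {m' | IsMIInst m' ∧ m' ∉ P ∧ MIle m' m} ⟨m, hm, hmP, MIle_refl hm⟩
  refine ⟨m₀, ⟨hm₀, hm₀P, fun m' hm' hm'P hle => ?_⟩, hm₀m⟩
  by_contra hne
  exact hmin m' ⟨hm', hm'P, MIle_trans hle hm₀m⟩ (miSize_lt_of_MIle hle hne)

lemma exists_two_le_card_mem_betaSet {m : MI N} (hm : IsMIInst m) :
    ∃ X : PSet N, 2 ≤ X.card ∧ m ∈ betaSet X := by
  obtain ⟨Y, Z, rfl, hY, hZ, hYZ⟩ := hm
  refine ⟨Y ∪ Z, ?_, Y, Z, rfl, hY, hZ, hYZ, rfl⟩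
  rw [Finset.card_union_of_disjoint hYZ]
  have := hY.card_pos
  have := hZ.card_pos
  omega

lemma IsMIInst.of_mem_betaSet {m : MI N} {X : PSet N} (h : m ∈ betaSet X) : IsMIInst m := by
  obtain ⟨Y, Z, rfl, hY, hZ, hYZ, -⟩ := h
  exact ⟨Y, Z, rfl, hY, hZ, hYZ⟩

lemma BPos.notMem_of_MIle {P : Set (MI N)} (hP : IsMIDownSet P) {X : PSet N} (hX : BPos P X)
    {m' m : MI N} (hm' : m' ∈ betaSet X) (hle : MIle m' m) : m ∉ P :=
  fun hmP => hX m' hm' (hP m' m (IsMIInst.of_mem_betaSet hm') hmP hle)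

theorem setOf_notMem_eq_upClosure_betaSet {P : Set (MI N)} (hP : IsMIDownSet P)
    (Q : PSet N → Prop) (hEssQ : ∀ X, BEss P X → Q X) (hQPos : ∀ X, Q X → BPos P X) :
    {m : MI N | IsMIInst m ∧ m ∉ P} =
      {m : MI N | IsMIInst m ∧ ∃ m' : MI N, MIle m' m ∧
        ∃ X : PSet N, 2 ≤ X.card ∧ Q X ∧ m' ∈ betaSet X} := by
  ext m
  constructor
  · rintro ⟨hm, hmP⟩
    refine ⟨hm, ?_⟩
    obtain ⟨m₀, hm₀, hle⟩ := exists_minimalMI_MIle P hm hmP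
    obtain ⟨X, hX, hm₀X⟩ := exists_two_le_card_mem_betaSet hm₀.1
    exact ⟨m₀, hle, X, hX, hEssQ X ⟨m₀, hm₀X, hm₀⟩, hm₀X⟩
  · rintro ⟨hm, m', hle, X, -, hQ, hm'⟩
    exact ⟨hm, (hQPos X hQ).notMem_of_MIle hP hm' hle⟩

end MIPoset

section Entropy

variable {N : ℕ} (v : EntropyVec N)

lemma EntropyVec.I_comm (Y Z : PSet N) : v.I Y Z = v.I Z Y := by
  rw [EntropyVec.I, EntropyVec.I, Finset.union_comm, add_comm]

lemma EntropyVec.I_empty_left (Z : PSet N) : v.I ∅ Z = 0 := by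
  simp [EntropyVec.I, v.S_empty]

lemma EntropyVec.I_empty_right (Y : PSet N) : v.I Y ∅ = 0 := by
  simp [EntropyVec.I, v.S_empty]

lemma EntropyVec.I_eq_zero_of_mem_PMI {Y Z : PSet N} (h : s(Y, Z) ∈ v.PMI) : v.I Y Z = 0 := by
  obtain ⟨Y', Z', heq, -, -, -, hI⟩ := h
  rcases Sym2.eq_iff.mp heq with ⟨rfl, rfl⟩ | ⟨rfl, rfl⟩
  · exact hI
  · rwa [I_comm]

variable {v}

lemma EntropyVec.InSAC.S_union_le (hv : v.InSAC) {A B : PSet N} (hAB : Disjoint A B) :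
    v.S (A ∪ B) ≤ v.S A + v.S B := by
  rcases A.eq_empty_or_nonempty with rfl | hA
  · simp [v.S_empty]
  rcases B.eq_empty_or_nonempty with rfl | hB
  · simp [v.S_empty]
  have := hv A B hA hB hAB
  rw [EntropyVec.I] at this
  linarith

/-- Subadditivity applied to `Y' = (Y ∩ Y') ∪ (Z ∩ Y')` and `Z' = (Y ∩ Z') ∪ (Z ∩ Z')`. -/
lemma EntropyVec.InSAC.I_le_I_add_I_inter (hv : v.InSAC) {Y Z Y' Z' : PSet N}
    (hYZ : Disjoint Y Z) (hX : Y ∪ Z = Y' ∪ Z') :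
    v.I Y' Z' ≤ v.I Y Z + v.I (Y ∩ Y') (Y ∩ Z') + v.I (Z ∩ Y') (Z ∩ Z') := by
  have hY : (Y ∩ Y') ∪ (Y ∩ Z') = Y := by
    rw [← Finset.inter_union_distrib_left, ← hX]; simp
  have hZ : (Z ∩ Y') ∪ (Z ∩ Z') = Z := by
    rw [← Finset.inter_union_distrib_left, ← hX]; simp
  have hY' : (Y ∩ Y') ∪ (Z ∩ Y') = Y' := by
    rw [← Finset.union_inter_distrib_right, hX]; simp
  have hZ' : (Y ∩ Z') ∪ (Z ∩ Z') = Z' := by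
    rw [← Finset.union_inter_distrib_right, hX]; simp
  have h₁ := hv.S_union_le (hYZ.mono (Y.inter_subset_left (s₂ := Y'))
    (Z.inter_subset_left (s₂ := Y')))
  have h₂ := hv.S_union_le (hYZ.mono (Y.inter_subset_left (s₂ := Z'))
    (Z.inter_subset_left (s₂ := Z')))
  rw [hY'] at h₁
  rw [hZ'] at h₂
  simp only [EntropyVec.I, hY, hZ, hX]
  linarith

end Entropy

section KCPMI

variable {N : ℕ} {P : Set (MI N)}

lemma I_eq_zero_of_lt_minimalMI {v : EntropyVec N} (hPv : P = v.PMI)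
    {Y₀ Z₀ A B : PSet N} (hm₀ : s(Y₀, Z₀) ∈ minimalMI P) (hA : A ⊆ Y₀) (hB : B ⊆ Z₀)
    (hAB : A ∪ B ≠ Y₀ ∪ Z₀) : v.I A B = 0 := by
  rcases A.eq_empty_or_nonempty with rfl | hAne
  · exact v.I_empty_left B
  rcases B.eq_empty_or_nonempty with rfl | hBne
  · exact v.I_empty_right A
  obtain ⟨⟨Y, Z, heq, -, -, hYZ⟩, -, hmin⟩ := hm₀
  have hY₀Z₀ : Disjoint Y₀ Z₀ := by
    rcases Sym2.eq_iff.mp heq with ⟨rfl, rfl⟩ | ⟨rfl, rfl⟩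
    exacts [hYZ, hYZ.symm]
  by_contra hI
  have hABP : s(A, B) ∉ P := fun h => hI (v.I_eq_zero_of_mem_PMI (hPv ▸ h))
  have := hmin s(A, B) ⟨A, B, rfl, hAne, hBne, hY₀Z₀.mono hA hB⟩ hABP
    ⟨A, B, Y₀, Z₀, rfl, rfl, hA, hB⟩
  rcases Sym2.eq_iff.mp this with ⟨rfl, rfl⟩ | ⟨rfl, rfl⟩
  exacts [hAB rfl, hAB (Finset.union_comm _ _)]

lemma inter_union_inter_ne_union {Y Z Y₀ Z₀ : PSet N} (hYZ : Disjoint Y Z)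
    (hZ : Z.Nonempty) : (Y ∩ Y₀) ∪ (Y ∩ Z₀) ≠ Y ∪ Z := by
  obtain ⟨z, hz⟩ := hZ
  intro h
  have : z ∈ Y := Finset.union_subset Finset.inter_subset_left Finset.inter_subset_left
    (h ▸ Finset.mem_union_right Y hz)
  exact Finset.disjoint_left.mp hYZ this hz

lemma BEss.bPos (hP : IsKCPMI P) {X : PSet N} (hX : BEss P X) : BPos P X := by
  obtain ⟨⟨v, hv, hPv⟩, -⟩ := hP
  rintro _ ⟨Y, Z, rfl, hY, hZ, hYZ, rfl⟩ hmP
  obtain ⟨m₀, ⟨Y₀, Z₀, rfl, hY₀, hZ₀, hY₀Z₀, hX₀⟩, hm₀⟩ := hX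
  have hpos : 0 < v.I Y₀ Z₀ := (hv Y₀ Z₀ hY₀ hZ₀ hY₀Z₀).lt_of_ne' fun h =>
    hm₀.2.1 (by rw [hPv]; exact ⟨Y₀, Z₀, rfl, hY₀, hZ₀, hY₀Z₀, h⟩)
  have hI : v.I Y Z = 0 := v.I_eq_zero_of_mem_PMI (by rwa [hPv] at hmP)
  have hsplit := hv.I_le_I_add_I_inter hYZ hX₀.symm
  rw [hI,
    I_eq_zero_of_lt_minimalMI hPv hm₀ Finset.inter_subset_right
      Finset.inter_subset_right (hX₀ ▸ inter_union_inter_ne_union hYZ hZ),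
    I_eq_zero_of_lt_minimalMI hPv hm₀ Finset.inter_subset_right
      Finset.inter_subset_right (hX₀ ▸ Finset.union_comm Z Y ▸ inter_union_inter_ne_union hYZ.symm hY)]
    at hsplit
  linarith

end KCPMI

theorem statement5_general {N : ℕ} (P : Set (MI N)) (hP : IsKCPMI P) :
    ({m : MI N | IsMIInst m ∧ m ∉ P} =
      {m : MI N | IsMIInst m ∧ ∃ m' : MI N, MIle m' m ∧
        ∃ X : PSet N, 2 ≤ X.card ∧ BEss P X ∧ m' ∈ betaSet X}) ∧
    ({m : MI N | IsMIInst m ∧ m ∉ P} =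
      {m : MI N | IsMIInst m ∧ ∃ m' : MI N, MIle m' m ∧
        ∃ X : PSet N, 2 ≤ X.card ∧ BPos P X ∧ m' ∈ betaSet X}) :=
  ⟨setOf_notMem_eq_upClosure_betaSet hP.2 _ (fun _ h => h) fun _ => BEss.bPos hP,
    setOf_notMem_eq_upClosure_betaSet hP.2 _ (fun _ => BEss.bPos hP) fun _ h => h⟩

/-- For every KC-PMI `P`, `P̄` equals the up-set (in the MI-poset)
generated by the union of all essential β-sets, and also the up-set generated by the
union of all positive β-sets. -/
theorem statement5 {N : ℕ} (hN : 2 ≤ N) (P : Set (MI N)) (hP : IsKCPMI P) :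
    ({m : MI N | IsMIInst m ∧ m ∉ P} =
      {m : MI N | IsMIInst m ∧ ∃ m' : MI N, MIle m' m ∧
        ∃ X : PSet N, 2 ≤ X.card ∧ BEss P X ∧ m' ∈ betaSet X}) ∧
    ({m : MI N | IsMIInst m ∧ m ∉ P} =
      {m : MI N | IsMIInst m ∧ ∃ m' : MI N, MIle m' m ∧
        ∃ X : PSet N, 2 ≤ X.card ∧ BPos P X ∧ m' ∈ betaSet X}) :=
  statement5_general P hP

end HEC
end
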